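/- Let 𝕏, 𝕐 be normed spaces and F : 𝕏 → 𝕐 a compact linear operator with infinite-dimensional domain 𝕏 (more precisely, assume the unit ball of 𝕏 is not compact). Then for every ϑ⁺ ∈ 𝕏 and every ρ > 0 there exists a sequence {ϑ_k} ⊆ B_ρ(ϑ⁺) with ϑ_k ↛ ϑ⁺ but F(ϑ_k) → F(ϑ⁺). -/

import Mathlib

/-!
Riesz's lemma gives a bounded sequence in `X` whose terms are pairwise at distance `≥ 1`.
Compactness of `F` yields a subsequence along which the images converge, so the differences of
consecutive terms have norm `≥ 1` while their images tend to `0`. Normalised and scaled by `ρ`,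
they put `ϑ + ρ • u k` on the sphere of radius `ρ` about `ϑ`, with images tending to `F ϑ`.
-/

open Filter Topology

theorem IsCompactOperator.exists_one_le_norm_tendsto_map_zero {𝕜 X Y : Type*}
    [NontriviallyNormedField 𝕜] [CompleteSpace 𝕜] [NormedAddCommGroup X] [NormedSpace 𝕜 X]
    [NormedAddCommGroup Y] [NormedSpace 𝕜 Y]
    {F : X →L[𝕜] Y} (hF : IsCompactOperator F) (hX : ¬ FiniteDimensional 𝕜 X) :
    ∃ d : ℕ → X, (∀ n, 1 ≤ ‖d n‖) ∧ Tendsto (fun n => F (d n)) atTop (𝓝 0) := by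
  obtain ⟨R, f, -, hfR, hf_sep⟩ := exists_seq_norm_le_one_le_norm_sub hX
  obtain ⟨K, hK, hFK⟩ := hF.image_closedBall_subset_compact (𝕜₁ := 𝕜) R
  have hfK : ∀ n, F (f n) ∈ K := fun n =>
    hFK ⟨f n, mem_closedBall_zero_iff.mpr (hfR n), rfl⟩
  obtain ⟨a, -, φ, hφ, hFfφ⟩ := hK.tendsto_subseq hfK
  refine ⟨fun n => f (φ (n + 1)) - f (φ n), fun n => hf_sep (hφ n.lt_succ_self).ne', ?_⟩
  simpa [map_sub] using (hFfφ.comp (tendsto_add_atTop_nat 1)).sub hFfφ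

theorem IsCompactOperator.exists_norm_eq_one_tendsto_map_zero {𝕜 X Y : Type*}
    [RCLike 𝕜] [NormedAddCommGroup X] [NormedSpace 𝕜 X]
    [NormedAddCommGroup Y] [NormedSpace 𝕜 Y]
    {F : X →L[𝕜] Y} (hF : IsCompactOperator F) (hX : ¬ FiniteDimensional 𝕜 X) :
    ∃ u : ℕ → X, (∀ n, ‖u n‖ = 1) ∧ Tendsto (fun n => F (u n)) atTop (𝓝 0) := by
  obtain ⟨d, hd, hFd⟩ := hF.exists_one_le_norm_tendsto_map_zero hX
  have hd0 : ∀ n, d n ≠ 0 := fun n => norm_pos_iff.mp (one_pos.trans_le (hd n))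
  refine ⟨fun n => (‖d n‖⁻¹ : 𝕜) • d n, fun n => norm_smul_inv_norm (hd0 n), ?_⟩
  refine squeeze_zero_norm (fun n => ?_) (tendsto_zero_iff_norm_tendsto_zero.mp hFd)
  rw [map_smul, norm_smul, norm_inv, RCLike.norm_ofReal, abs_norm]
  exact mul_le_of_le_one_left (norm_nonneg _) (inv_le_one_of_one_le₀ (hd n))

/-- A compact linear operator `F` on a space whose closed unit ball is not compact yields
a (uniformly) locally ill-posed problem: for every `ϑ⁺` and `ρ > 0` there is a sequence
in the closed ball `B_ρ(ϑ⁺)` not converging to `ϑ⁺` whose images converge to `F(ϑ⁺)`. -/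
theorem stmt17 {X Y : Type*} [NormedAddCommGroup X] [NormedSpace ℝ X]
    [NormedAddCommGroup Y] [NormedSpace ℝ Y]
    (F : X →L[ℝ] Y) (hF : IsCompactOperator F)
    (hX : ¬ IsCompact (Metric.closedBall (0 : X) 1))
    (ϑ : X) (ρ : ℝ) (hρ : 0 < ρ) :
    ∃ s : ℕ → X, (∀ k, s k ∈ Metric.closedBall ϑ ρ) ∧
      ¬ Tendsto s atTop (nhds ϑ) ∧
      Tendsto (fun k => F (s k)) atTop (nhds (F ϑ)) := by
  have hXinf : ¬ FiniteDimensional ℝ X := fun _ => hX (isCompact_closedBall 0 1)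
  obtain ⟨u, hu, hFu⟩ := hF.exists_norm_eq_one_tendsto_map_zero hXinf
  have hdist : ∀ k, dist (ϑ + ρ • u k) ϑ = ρ := fun k => by
    rw [dist_self_add_left, norm_smul, hu, Real.norm_of_nonneg hρ.le, mul_one]
  refine ⟨fun k => ϑ + ρ • u k, fun k => (hdist k).le, fun h => ?_, ?_⟩
  · have := tendsto_iff_dist_tendsto_zero.mp h
    simp only [hdist] at this
    exact hρ.ne' (tendsto_nhds_unique tendsto_const_nhds this)
  · simpa using tendsto_const_nhds.add (hFu.const_smul ρ)
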